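/- arXiv:1810.06820 — 7 statements merged into one kernel-verified Lean document; each statement's English description precedes it below -/
import Mathlib

section
/- Let n, k, l be positive integers with k + l < n and l > n/2. If 𝒜 ⊆ C([n],k) and ℬ ⊆ C([n],l) are cross-intersecting and |ℬ| > C(n-1, l-1), then |𝒜|·|ℬ| < C(n-1, k-1)·C(n-1, l-1). -/
/-!
Pass to complements: `F = {[n] \ b : b ∈ ℬ}` is a family of `m = n - l`-sets with
`|F| = C(n-1, m) + e`, `e ≥ 1`, and `𝒜` avoids the iterated shadow `∂^(m-k) F`, so
`|𝒜| ≤ C(n, k) - |∂^(m-k) F|`. By Kruskal–Katona, `∂^(m-k) F` is at least as large as the shadow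
of the colex initial segment of the same size, which consists of all `m`-subsets of `[n-1]`
together with `{g ∪ {n} : g ∈ G}` for an initial segment `G` of `e` sets of size `m - 1`. That
shadow has `C(n-1, k) + s` elements with `s = |∂^(m-k) G|`, and local LYM gives
`e C(n-1, k-1) ≤ s C(n-1, m-1)`. Hence `|𝒜| ≤ C(n-1, k-1) - s`, and since `l > n/2` forces
`C(n-1, m-1) ≤ C(n-1, m)`,
`|𝒜| |ℬ| ≤ (C(n-1, k-1) - s)(C(n-1, m) + e) ≤ C(n-1, k-1) C(n-1, m) - s e`.
-/

open Finset Finset.Colex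
open scoped FinsetFamily

namespace Finset

section Shadow
variable {α : Type*} [DecidableEq α]

lemma powersetCard_sub_subset_shadow_iterate {s : Finset α} {r i : ℕ} (hi : i ≤ r)
    (hr : r ≤ #s) : powersetCard (r - i) s ⊆ ∂^[i] (powersetCard r s) := by
  intro t ht
  rw [mem_powersetCard] at ht
  obtain ⟨u, htu, hus, hu⟩ := exists_subsuperset_card_eq ht.1 (n := r) (by omega) hr
  rw [mem_shadow_iterate_iff_exists_sdiff]
  exact ⟨u, mem_powersetCard.2 ⟨hus, hu⟩, htu, by rw [card_sdiff_of_subset htu, hu, ht.2]; omega⟩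

variable [Fintype α]

lemma card_div_choose_le_card_shadow_iterate_div_choose {𝕜 : Type*} [Semifield 𝕜]
    [LinearOrder 𝕜] [IsStrictOrderedRing 𝕜] {𝒜 : Finset (Finset α)} {r i : ℕ}
    (h𝒜 : (𝒜 : Set (Finset α)).Sized r) (hi : i ≤ r) :
    (#𝒜 : 𝕜) / (Fintype.card α).choose r ≤ #(∂^[i] 𝒜) / (Fintype.card α).choose (r - i) := by
  induction i with
  | zero => simp
  | succ i ih =>
    rw [Function.iterate_succ_apply', show r - (i + 1) = r - i - 1 by omega]
    exact (ih (by omega)).trans <|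
      local_lubell_yamamoto_meshalkin_inequality_div (by omega) h𝒜.shadow_iterate

lemma card_mul_choose_le_card_shadow_iterate_mul_choose {𝒜 : Finset (Finset α)} {r i : ℕ}
    (h𝒜 : (𝒜 : Set (Finset α)).Sized r) (hi : i ≤ r) (hr : r ≤ Fintype.card α) :
    #𝒜 * (Fintype.card α).choose (r - i) ≤ #(∂^[i] 𝒜) * (Fintype.card α).choose r := by
  have := card_div_choose_le_card_shadow_iterate_div_choose (𝕜 := ℚ) h𝒜 hi
  rw [div_le_div_iff₀ (by exact_mod_cast Nat.choose_pos hr)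
    (by exact_mod_cast Nat.choose_pos (by omega))] at this
  exact_mod_cast this

lemma disjoint_shadow_iterate_compls {𝒜 ℬ : Finset (Finset α)}
    (h : ∀ a ∈ 𝒜, ∀ b ∈ ℬ, (a ∩ b).Nonempty) (i : ℕ) : Disjoint 𝒜 (∂^[i] ℬᶜˢ) := by
  refine disjoint_left.2 fun a ha ha' ↦ ?_
  obtain ⟨c, hc, hac, -⟩ := mem_shadow_iterate_iff_exists_sdiff.1 ha'
  obtain ⟨x, hx⟩ := h a ha cᶜ (mem_compls.1 hc)
  rw [mem_inter, mem_compl] at hx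
  exact hx.2 (hac hx.1)

lemma card_add_card_shadow_iterate_compls_le {𝒜 ℬ : Finset (Finset α)} {k l : ℕ}
    (h𝒜 : (𝒜 : Set (Finset α)).Sized k) (hℬ : (ℬ : Set (Finset α)).Sized l)
    (h : ∀ a ∈ 𝒜, ∀ b ∈ ℬ, (a ∩ b).Nonempty) (hkl : k + l ≤ Fintype.card α) :
    #𝒜 + #(∂^[Fintype.card α - l - k] ℬᶜˢ) ≤ (Fintype.card α).choose k := by
  rw [← card_union_of_disjoint (disjoint_shadow_iterate_compls h _)]
  refine Set.Sized.card_le ?_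
  rw [coe_union, Set.sized_union]
  refine ⟨h𝒜, ?_⟩
  simpa [show Fintype.card α - l - (Fintype.card α - l - k) = k by omega]
    using hℬ.compls.shadow_iterate (k := Fintype.card α - l - k)

end Shadow

lemma exists_sized_map_eq_of_subset_powersetCard_map {α β : Type*} [Fintype α]
    {f : α ↪ β} {𝒜 : Finset (Finset β)} {k : ℕ} (h𝒜 : 𝒜 ⊆ powersetCard k (univ.map f)) :
    ∃ 𝒜' : Finset (Finset α), (𝒜' : Set (Finset α)).Sized k ∧
      𝒜'.map (mapEmbedding f).toEmbedding = 𝒜 := by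
  rw [powersetCard_map] at h𝒜
  obtain ⟨𝒜', h𝒜', rfl⟩ := subset_map_iff.1 h𝒜
  exact ⟨𝒜', fun s hs ↦ (mem_powersetCard.1 (h𝒜' hs)).2, rfl⟩

namespace Colex
variable {α : Type*} [LinearOrder α]

lemma toColex_lt_toColex_of_forall_lt_of_mem {s t : Finset α} {a : α} (hs : ∀ b ∈ s, b < a)
    (ht : a ∈ t) : toColex s < toColex t :=
  lt_of_not_ge fun hts ↦ lt_irrefl a (forall_lt_mono hts hs a ht)

lemma toColex_insert_lt_toColex_insert {s t : Finset α} {a : α} (hs : a ∉ s) (ht : a ∉ t) :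
    toColex (insert a s) < toColex (insert a t) ↔ toColex s < toColex t := by
  rw [← toColex_sdiff_lt_toColex_sdiff', insert_sdiff_insert, insert_sdiff_insert,
    sdiff_insert_of_notMem hs, sdiff_insert_of_notMem ht, toColex_sdiff_lt_toColex_sdiff']

lemma exists_isInitSeg_card_eq [Fintype α] {r e : ℕ} (he : e ≤ (Fintype.card α).choose r) :
    ∃ 𝒜 : Finset (Finset α), IsInitSeg 𝒜 r ∧ #𝒜 = e := by
  induction e with
  | zero => exact ⟨∅, isInitSeg_empty, card_empty⟩
  | succ e ih =>
    obtain ⟨𝒜, h𝒜, rfl⟩ := ih (by omega)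
    have hne : (powersetCard r univ \ 𝒜).Nonempty := by
      rw [← card_pos, card_sdiff_of_subset, card_powersetCard, card_univ]
      · omega
      · exact fun s hs ↦ mem_powersetCard.2 ⟨subset_univ s, h𝒜.1 hs⟩
    obtain ⟨s, hs, hmin⟩ := exists_min_image _ toColex hne
    rw [mem_sdiff, mem_powersetCard] at hs
    refine ⟨insert s 𝒜, ⟨?_, ?_⟩, card_insert_of_notMem hs.2⟩
    · rintro t ht
      obtain rfl | ht := mem_insert.1 ht
      exacts [hs.1.2, h𝒜.1 ht]
    · rintro u t hu ⟨htu, ht⟩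
      obtain rfl | hu := mem_insert.1 hu
      · refine mem_insert.2 (or_iff_not_imp_right.2 fun htA ↦ ?_)
        exact absurd htu (hmin t (mem_sdiff.2 ⟨mem_powersetCard.2 ⟨subset_univ t, ht⟩, htA⟩)).not_gt
      · exact mem_insert_of_mem (h𝒜.2 hu ⟨htu, ht⟩)

end Colex
end Finset

namespace Fin
variable {N : ℕ}

lemma last_notMem_map_castSuccEmb (s : Finset (Fin N)) : last N ∉ s.map castSuccEmb := by
  simp [castSucc_ne_last]

def insertLast (s : Finset (Fin N)) : Finset (Fin (N + 1)) :=
  insert (last N) (s.map castSuccEmb)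

lemma insertLast_injective : Function.Injective (insertLast (N := N)) := fun s t h ↦ by
  have := congrArg (erase · (last N)) h
  simpa [insertLast, erase_insert (last_notMem_map_castSuccEmb _)] using this

lemma card_insertLast (s : Finset (Fin N)) : #(insertLast s) = #s + 1 := by
  rw [insertLast, card_insert_of_notMem (last_notMem_map_castSuccEmb s), card_map]

lemma exists_insertLast_eq {t : Finset (Fin (N + 1))} (ht : last N ∈ t) :
    ∃ s, insertLast s = t := by
  obtain ⟨s, -, hs⟩ := subset_map_iff.1 (show t.erase (last N) ⊆ univ.map castSuccEmb by
    rw [← Iio_last_eq_map]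
    intro x hx
    rw [mem_Iio, lt_last_iff_ne_last]
    exact ne_of_mem_erase hx)
  exact ⟨s, by rw [insertLast, ← hs, insert_erase ht]⟩

lemma toColex_insertLast_lt_toColex_insertLast {s t : Finset (Fin N)} :
    toColex (insertLast s) < toColex (insertLast t) ↔ toColex s < toColex t := by
  rw [insertLast, insertLast, toColex_insert_lt_toColex_insert (last_notMem_map_castSuccEmb s)
    (last_notMem_map_castSuccEmb t), map_eq_image, map_eq_image]
  exact toColex_image_lt_toColex_image strictMono_castSucc

lemma image_insertLast_shadow_iterate_subset (G : Finset (Finset (Fin N))) (i : ℕ) :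
    (∂^[i] G).image insertLast ⊆ ∂^[i] (G.image insertLast) := by
  simp only [subset_iff, mem_image, mem_shadow_iterate_iff_exists_sdiff]
  rintro _ ⟨t, ⟨s, hs, hts, hcard⟩, rfl⟩
  refine ⟨insertLast s, ⟨s, hs, rfl⟩, insert_subset_insert _ (map_subset_map.2 hts), ?_⟩
  rwa [insertLast, insertLast, insert_sdiff_insert,
    sdiff_insert_of_notMem (last_notMem_map_castSuccEmb s), ← Finset.map_sdiff, card_map]

lemma disjoint_powersetCard_Iio_last_image_insertLast (G : Finset (Finset (Fin N))) (r : ℕ) :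
    Disjoint (powersetCard r (Iio (last N))) (G.image insertLast) := by
  simp only [disjoint_left, mem_powersetCard, mem_image, not_exists, not_and]
  rintro _ ⟨hs, -⟩ s - rfl
  exact lt_irrefl _ (mem_Iio.1 (hs (mem_insert_self _ _)))

lemma card_powersetCard_Iio_last_union_image_insertLast (G : Finset (Finset (Fin N))) (r : ℕ) :
    #(powersetCard r (Iio (last N)) ∪ G.image insertLast) = N.choose r + #G := by
  rw [card_union_of_disjoint (disjoint_powersetCard_Iio_last_image_insertLast G r),
    card_powersetCard, card_Iio, val_last, card_image_of_injective _ insertLast_injective]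

/-- Colex puts the sets avoiding the largest element `last N` before all the sets containing it. -/
lemma isInitSeg_powersetCard_Iio_last_union_image_insertLast {G : Finset (Finset (Fin N))}
    {r : ℕ} (hG : IsInitSeg G r) :
    IsInitSeg (powersetCard (r + 1) (Iio (last N)) ∪ G.image insertLast) (r + 1) := by
  refine ⟨fun t ht ↦ ?_, fun s t hs ⟨hts, ht⟩ ↦ ?_⟩
  · obtain ht | ⟨g, hg, rfl⟩ := mem_union.1 ht |>.imp_right mem_image.1
    exacts [(mem_powersetCard.1 ht).2, by rw [card_insertLast, hG.1 hg]]
  rw [mem_union, mem_powersetCard, mem_image]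
  by_cases hlast : last N ∈ t
  · obtain ⟨t, rfl⟩ := exists_insertLast_eq hlast
    obtain hs | ⟨g, hg, rfl⟩ := mem_union.1 hs |>.imp_right mem_image.1
    · refine absurd hts (toColex_lt_toColex_of_forall_lt_of_mem (fun b hb ↦ ?_) hlast).not_gt
      exact mem_Iio.1 ((mem_powersetCard.1 hs).1 hb)
    · rw [toColex_insertLast_lt_toColex_insertLast] at hts
      rw [card_insertLast, add_left_inj] at ht
      exact .inr ⟨t, hG.2 hg ⟨hts, ht⟩, rfl⟩
  · refine .inl ⟨fun x hx ↦ ?_, ht⟩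
    rw [mem_Iio, lt_last_iff_ne_last]
    exact ne_of_mem_of_not_mem hx hlast

theorem choose_add_card_shadow_iterate_le {𝒜 : Finset (Finset (Fin (N + 1)))}
    {G : Finset (Finset (Fin N))} {r i : ℕ} (h𝒜 : (𝒜 : Set (Finset (Fin (N + 1)))).Sized (r + 1))
    (hG : IsInitSeg G r) (hcard : N.choose (r + 1) + #G ≤ #𝒜) (hi : i ≤ r + 1)
    (hrN : r + 1 ≤ N) :
    N.choose (r + 1 - i) + #(∂^[i] G) ≤ #(∂^[i] 𝒜) := by
  set 𝒞 := powersetCard (r + 1) (Iio (last N)) ∪ G.image insertLast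
  calc N.choose (r + 1 - i) + #(∂^[i] G)
      = #(powersetCard (r + 1 - i) (Iio (last N)) ∪ (∂^[i] G).image insertLast) :=
        (card_powersetCard_Iio_last_union_image_insertLast _ _).symm
    _ ≤ #(∂^[i] 𝒞) := by
        refine card_le_card (union_subset ?_ ?_)
        · exact (powersetCard_sub_subset_shadow_iterate hi (by rwa [card_Iio, val_last])).trans
            (shadow_monotone.iterate i subset_union_left)
        · exact (image_insertLast_shadow_iterate_subset G i).trans
            (shadow_monotone.iterate i subset_union_right)
    _ ≤ #(∂^[i] 𝒜) :=
        iterated_kk h𝒜 (card_powersetCard_Iio_last_union_image_insertLast G _ ▸ hcard)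
          (isInitSeg_powersetCard_Iio_last_union_image_insertLast hG)

lemma map_valEmbedding_trans_addRightEmbedding_one_univ (n : ℕ) :
    (univ : Finset (Fin n)).map (valEmbedding.trans (addRightEmbedding 1)) = Icc 1 n := by
  rw [← map_map, map_valEmbedding_univ]
  ext x
  simp only [mem_map, mem_Iio, addRightEmbedding_apply, mem_Icc]
  constructor
  · rintro ⟨y, hy, rfl⟩; omega
  · intro hx; exact ⟨x - 1, by omega, by omega⟩

end Fin

lemma Nat.mul_add_lt_mul_of_add_le {a s c d d' e : ℕ} (hsc : a + s ≤ c) (hes : e * c ≤ s * d')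
    (hd : d' ≤ d) (he : 0 < e) (hc : 0 < c) : a * (d + e) < c * d := by
  have hs : 0 < s := Nat.pos_of_ne_zero (by rintro rfl; simp at hes; omega)
  zify at *
  nlinarith [mul_le_mul_of_nonneg_left hd hs.le, mul_pos hs he]

theorem Fin.card_mul_card_lt_of_forall_inter_nonempty {N k l : ℕ}
    {A B : Finset (Finset (Fin (N + 1)))} (hA : (A : Set (Finset (Fin (N + 1)))).Sized k)
    (hB : (B : Set (Finset (Fin (N + 1)))).Sized l) (hk : 0 < k) (hkl : k + l < N + 1)
    (hl : N + 1 < 2 * l) (hcross : ∀ a ∈ A, ∀ b ∈ B, (a ∩ b).Nonempty)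
    (hBbig : N.choose (l - 1) < #B) :
    #A * #B < N.choose (k - 1) * N.choose (l - 1) := by
  set r := N - l
  have hsymm : N.choose (l - 1) = N.choose (r + 1) := by
    rw [← Nat.choose_symm (by omega)]; congr 1; omega
  have hBc : (Bᶜˢ : Set (Finset (Fin (N + 1)))).Sized (r + 1) := by
    simpa [show N + 1 - l = r + 1 by omega] using hB.compls
  have hBle : #B ≤ N.choose (r + 1) + N.choose r := by
    have := hB.card_le
    rwa [Fintype.card_fin, Nat.choose_succ_left _ _ (by omega), hsymm,
      ← Nat.choose_symm (show l ≤ N by omega)] at this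
  obtain ⟨G, hG, hGcard⟩ := exists_isInitSeg_card_eq (α := Fin N) (r := r)
    (e := #B - N.choose (r + 1)) (by rw [Fintype.card_fin]; omega)
  have hKK := choose_add_card_shadow_iterate_le hBc hG (i := N + 1 - l - k)
    (by rw [card_compls]; omega) (by omega) (by omega)
  have hLYM := card_mul_choose_le_card_shadow_iterate_mul_choose hG.1 (i := N + 1 - l - k)
    (by omega) (by rw [Fintype.card_fin]; omega)
  have hAF := card_add_card_shadow_iterate_compls_le hA hB hcross (by rw [Fintype.card_fin]; omega)
  rw [Fintype.card_fin, show r - (N + 1 - l - k) = k - 1 by omega, hGcard] at hLYM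
  rw [show r + 1 - (N + 1 - l - k) = k by omega] at hKK
  rw [Fintype.card_fin, Nat.choose_succ_left _ _ hk] at hAF
  rw [hsymm, ← Nat.add_sub_cancel' (show N.choose (r + 1) ≤ #B by omega)]
  exact Nat.mul_add_lt_mul_of_add_le (by omega) hLYM
    (Nat.choose_le_succ_of_lt_half_left (by omega)) (by omega) (Nat.choose_pos (by omega))

theorem stmt_6_general (n k l : ℕ) (hk : 0 < k) (hkl : k + l < n)
    (hl2 : n < 2 * l)
    (A B : Finset (Finset ℕ))
    (hA : A ⊆ Finset.powersetCard k (Finset.Icc 1 n))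
    (hB : B ⊆ Finset.powersetCard l (Finset.Icc 1 n))
    (hcross : ∀ a ∈ A, ∀ b ∈ B, (a ∩ b).Nonempty)
    (hBbig : Nat.choose (n-1) (l-1) < B.card) :
    A.card * B.card < Nat.choose (n-1) (k-1) * Nat.choose (n-1) (l-1) := by
  obtain ⟨N, rfl⟩ : ∃ N, n = N + 1 := ⟨n - 1, by omega⟩
  rw [← Fin.map_valEmbedding_trans_addRightEmbedding_one_univ] at hA hB
  obtain ⟨A', hA', rfl⟩ := exists_sized_map_eq_of_subset_powersetCard_map hA
  obtain ⟨B', hB', rfl⟩ := exists_sized_map_eq_of_subset_powersetCard_map hB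
  simp only [card_map, Nat.add_sub_cancel] at hBbig ⊢
  refine Fin.card_mul_card_lt_of_forall_inter_nonempty hA' hB' hk hkl hl2 (fun a ha b hb ↦ ?_)
    hBbig
  simpa [← Finset.map_inter] using hcross _ (mem_map_of_mem _ ha) _ (mem_map_of_mem _ hb)

theorem stmt_6 (n k l : ℕ) (hk : 0 < k) (hl : 0 < l) (hkl : k + l < n)
    (hl2 : n < 2 * l)
    (A B : Finset (Finset ℕ))
    (hA : A ⊆ Finset.powersetCard k (Finset.Icc 1 n))
    (hB : B ⊆ Finset.powersetCard l (Finset.Icc 1 n))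
    (hcross : ∀ a ∈ A, ∀ b ∈ B, (a ∩ b).Nonempty)
    (hBbig : Nat.choose (n-1) (l-1) < B.card) :
    A.card * B.card < Nat.choose (n-1) (k-1) * Nat.choose (n-1) (l-1) :=
  stmt_6_general n k l hk hkl hl2 A B hA hB hcross hBbig
end

section
/- Let n, k, l be positive integers with k + l < n and l > n/2, and let x be a real number with n-l-1 ≤ x ≤ n-1. Then C(n-1, l-1)·C(x, k-1) > C(n-1, k-1)·C(x, n-l-1), where C(x,t) denotes the generalized binomial coefficient x(x-1)···(x-t+1)/t! (and C(x,t)=0 if x < t, C(x,0)=1). -/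
open Finset

/-- Generalized binomial coefficient `C(x,t)` for real `x`, with `C(x,0)=1`
and `C(x,t)=0` if `x < t`. -/
noncomputable def genChoose (x : ℝ) (t : ℕ) : ℝ :=
  if t = 0 then 1
  else if x < t then 0
  else (∏ i ∈ Finset.range t, (x - i)) / (Nat.factorial t)

lemma genChoose_eq (x : ℝ) (t : ℕ) (h : (t:ℝ) ≤ x) :
    genChoose x t = (∏ i ∈ Finset.range t, (x - i)) / (Nat.factorial t) := by
  unfold genChoose
  rcases Nat.eq_zero_or_pos t with h0 | h0
  · subst h0; simp
  · rw [if_neg h0.ne', if_neg (not_lt.2 h)]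

lemma prod_pos_of_le (x : ℝ) (t : ℕ) (h : (t:ℝ) ≤ x) :
    0 < ∏ i ∈ Finset.range t, (x - i) := by
  apply Finset.prod_pos
  intro i hi
  have hi' : (i:ℝ) < t := by exact_mod_cast Finset.mem_range.1 hi
  linarith

lemma fact_prod (b m : ℕ) :
    (((b + m).factorial : ℝ)) = (b.factorial : ℝ) * ∏ i ∈ Finset.range m, ((b:ℝ) + 1 + i) := by
  induction m with
  | zero => simp
  | succ m ih =>
    rw [Finset.prod_range_succ, ← mul_assoc, ← ih,
      show b + (m + 1) = (b + m) + 1 from rfl, Nat.factorial_succ]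
    push_cast
    ring

lemma prod_shift (z : ℝ) (p q : ℕ) (h : p ≤ q) :
    ∏ i ∈ Finset.range q, (z - i) =
      (∏ i ∈ Finset.range p, (z - i)) * ∏ i ∈ Finset.range (q - p), (z - p - i) := by
  conv_lhs => rw [show q = p + (q - p) by omega, Finset.prod_range_add]
  refine congrArg _ (Finset.prod_congr rfl fun i _ => ?_)
  push_cast
  ring

theorem stmt_7 (n k l : ℕ) (hk : 0 < k) (hl : 0 < l) (hkl : k + l < n)
    (hl2 : n < 2 * l) (x : ℝ) (hx1 : (n:ℝ) - l - 1 ≤ x) (hx2 : x ≤ (n:ℝ) - 1) :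
    genChoose ((n:ℝ) - 1) (l - 1) * genChoose x (k - 1) >
      genChoose ((n:ℝ) - 1) (k - 1) * genChoose x (n - l - 1) := by
  set a := k - 1 with ha
  set b := n - l - 1 with hb
  set c := l - 1 with hc
  set y : ℝ := (n:ℝ) - 1 with hy
  -- natural number facts
  have hab : a + 1 ≤ b := by omega
  have hbc : b + 1 ≤ c := by omega
  have hnbc : b + c + 2 = n := by omega
  -- cast facts
  have hbR : (b:ℝ) = (n:ℝ) - l - 1 := by
    have h1 : b + (l + 1) = n := by omega
    have h2 := congrArg (Nat.cast : ℕ → ℝ) h1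
    push_cast at h2; linarith
  have hcR : (c:ℝ) = (l:ℝ) - 1 := by
    have h1 : c + 1 = l := by omega
    have h2 := congrArg (Nat.cast : ℕ → ℝ) h1
    push_cast at h2; linarith
  have hyR : y = (b:ℝ) + c + 1 := by
    have h2 := congrArg (Nat.cast : ℕ → ℝ) hnbc
    push_cast at h2; rw [hy]; linarith
  have habR : (a:ℝ) + 1 ≤ b := by exact_mod_cast Nat.cast_le.2 hab |>.trans_eq (by push_cast; ring)
  have hbcR : (b:ℝ) + 1 ≤ c := by exact_mod_cast Nat.cast_le.2 hbc |>.trans_eq (by push_cast; ring)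
  -- ordering facts over ℝ
  have hxb : (b:ℝ) ≤ x := by rw [hbR]; exact hx1
  have hxa : (a:ℝ) ≤ x := by linarith
  have hxy : x ≤ y := hx2
  have hcy : (c:ℝ) ≤ y := by rw [hyR]; have : (0:ℝ) ≤ b := Nat.cast_nonneg b; linarith
  have hby : (b:ℝ) ≤ y := by linarith
  have hay : (a:ℝ) ≤ y := by linarith
  -- rewrite genChoose
  rw [genChoose_eq y c hcy, genChoose_eq x a hxa, genChoose_eq y a hay,
    genChoose_eq x b hxb, gt_iff_lt, div_mul_div_comm, div_mul_div_comm,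
    div_lt_div_iff₀ (by positivity) (by positivity)]
  -- abbreviations
  set m1 := b - a with hm1
  set m2 := c - b with hm2
  set Pya := ∏ i ∈ Finset.range a, (y - i) with hPya
  set Pxa := ∏ i ∈ Finset.range a, (x - i) with hPxa
  set R := ∏ i ∈ Finset.range m1, (y - a - i) with hR
  set Q := ∏ i ∈ Finset.range m1, (x - a - i) with hQ
  set S := ∏ i ∈ Finset.range m2, (y - b - i) with hS
  set T := ∏ i ∈ Finset.range m2, ((b:ℝ) + 1 + i) with hT
  -- product splittings
  have hm1R : (m1:ℝ) = (b:ℝ) - a := by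
    have h1 : m1 + a = b := by omega
    have h2 := congrArg (Nat.cast : ℕ → ℝ) h1
    push_cast at h2; linarith
  have hPyc : ∏ i ∈ Finset.range c, (y - i) = Pya * R * S := by
    rw [prod_shift y a c (by omega), mul_assoc]
    congr 1
    rw [prod_shift (y - (a:ℝ)) m1 (c - a) (by omega), show c - a - m1 = m2 by omega]
    congr 1
    apply Finset.prod_congr rfl
    intro i _
    rw [hm1R]
    ring
  have hPxb : ∏ i ∈ Finset.range b, (x - i) = Pxa * Q := by
    rw [prod_shift x a b (by omega)]
  -- positivity
  have hPyapos : 0 < Pya := prod_pos_of_le y a hay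
  have hPxapos : 0 < Pxa := prod_pos_of_le x a hxa
  have hQpos : 0 < Q := by
    apply Finset.prod_pos
    intro i hi
    have h1 : i + a + 1 ≤ b := by have := Finset.mem_range.1 hi; omega
    have h2 : (i:ℝ) + a + 1 ≤ b := by exact_mod_cast Nat.cast_le.2 h1 |>.trans_eq (by push_cast; ring)
    linarith
  have hSpos : 0 < S := by
    apply Finset.prod_pos
    intro i hi
    have h1 : i + b + 1 ≤ c := by have := Finset.mem_range.1 hi; omega
    have h2 : (i:ℝ) + b + 1 ≤ c := by exact_mod_cast Nat.cast_le.2 h1 |>.trans_eq (by push_cast; ring)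
    linarith
  have hQR : Q ≤ R := by
    apply Finset.prod_le_prod
    · intro i hi
      have h1 : i + a + 1 ≤ b := by have := Finset.mem_range.1 hi; omega
      have h2 : (i:ℝ) + a + 1 ≤ b := by exact_mod_cast Nat.cast_le.2 h1 |>.trans_eq (by push_cast; ring)
      linarith
    · intro i _
      linarith [hxy]
  -- S as ascending product
  have hSeq : S = ∏ i ∈ Finset.range m2, ((b:ℝ) + 2 + i) := by
    rw [hS, ← Finset.prod_range_reflect (fun j => y - b - (j:ℕ)) m2]
    apply Finset.prod_congr rfl
    intro i hi
    have hi' := Finset.mem_range.1 hi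
    have h1 : (m2 - 1 - i) + i + 1 = m2 := by omega
    have h2 := congrArg (Nat.cast : ℕ → ℝ) h1
    push_cast at h2
    have h3 : b + m2 = c := by omega
    have h4 := congrArg (Nat.cast : ℕ → ℝ) h3
    push_cast at h4
    rw [hyR]
    linarith
  have hTS : T < S := by
    rw [hSeq, hT]
    apply Finset.prod_lt_prod_of_nonempty
    · intro i _; positivity
    · intro i _; norm_num
    · rw [Finset.nonempty_range_iff]; omega
  -- factorial identity
  have hfact : ((c.factorial : ℝ)) = (b.factorial : ℝ) * T := by
    rw [show c = b + m2 by omega]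
    exact fact_prod b m2
  rw [hPyc, hPxb, hfact]
  have key : Q * T < R * S := by
    have hTpos : 0 < T := by
      apply Finset.prod_pos; intro i _; positivity
    linarith [mul_lt_mul_of_pos_left hTS hQpos, mul_le_mul_of_nonneg_right hQR hSpos.le]
  have hpos : (0:ℝ) < Pya * Pxa * ((a.factorial : ℝ) * (b.factorial : ℝ)) := by
    have h1 : (0:ℝ) < (a.factorial : ℝ) := by exact_mod_cast a.factorial_pos
    have h2 : (0:ℝ) < (b.factorial : ℝ) := by exact_mod_cast b.factorial_pos
    positivity
  linarith [mul_lt_mul_of_pos_left key hpos]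
end

section
/- If α, β ∈ (0,1) with α + β > 1, then sup over n of the maximum of μ_α(𝒜)·μ_β(ℬ) over cross-intersecting families 𝒜, ℬ ⊆ 2^{[n]} equals 1. In particular, for every ε > 0 there exist n and cross-intersecting 𝒜, ℬ ⊆ 2^{[n]} with μ_α(𝒜)·μ_β(ℬ) > 1 − ε. -/
open Finset

def mu (n : ℕ) (p : ℝ) (F : Finset (Finset ℕ)) : ℝ :=
  ∑ A ∈ F, p ^ A.card * (1 - p) ^ (n - A.card)

def crossProdSet (n : ℕ) (α β : ℝ) : Set ℝ :=
  {x | ∃ A B : Finset (Finset ℕ),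
    A ⊆ (Finset.Icc 1 n).powerset ∧ B ⊆ (Finset.Icc 1 n).powerset ∧
    (∀ a ∈ A, ∀ b ∈ B, (a ∩ b).Nonempty) ∧ x = mu n α A * mu n β B}

/-!
Cut `[m k]` into `m` blocks of size `k`, and let `𝒜` consist of the sets containing a whole
block and `ℬ` of the sets meeting every block; these cross-intersect. Under `μ_p` the blocks are
independent, so `μ_α(𝒜) = 1 - (1 - α ^ k) ^ m` and `μ_β(ℬ) = (1 - (1 - β) ^ k) ^ m`. Because
`1 - β < α`, the choice `m = ⌈k / α ^ k⌉` makes `m α ^ k ≥ k → ∞` while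
`m (1 - β) ^ k ≤ k ((1 - β) / α) ^ k + (1 - β) ^ k → 0`, so both measures tend to `1`.
-/

section PowersetSums

variable {α R : Type*} [DecidableEq α] [CommSemiring R]

theorem sum_powerset_union_mul {S T : Finset α} (h : Disjoint S T) (f g : Finset α → R) :
    ∑ F ∈ (S ∪ T).powerset, f (F ∩ S) * g (F ∩ T) =
      (∑ A ∈ S.powerset, f A) * ∑ B ∈ T.powerset, g B := by
  rw [sum_mul_sum, ← sum_product']
  refine sum_nbij' (fun F => (F ∩ S, F ∩ T)) (fun q => q.1 ∪ q.2) ?_ ?_ ?_ ?_ (fun _ _ => rfl)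
  · intro F _
    simp only [mem_product, mem_powerset]
    exact ⟨inter_subset_right, inter_subset_right⟩
  · intro q hq
    simp only [mem_product, mem_powerset] at hq ⊢
    exact union_subset_union hq.1 hq.2
  · intro F hF
    rw [← inter_union_distrib_left, inter_eq_left.2 (mem_powerset.1 hF)]
  · rintro ⟨A, B⟩ hAB
    simp only [mem_product, mem_powerset] at hAB
    simp only [union_inter_distrib_right, inter_eq_left.2 hAB.1, inter_eq_left.2 hAB.2,
      disjoint_iff_inter_eq_empty.1 (h.mono_left hAB.1),
      disjoint_iff_inter_eq_empty.1 (h.symm.mono_left hAB.2), union_empty, empty_union]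

theorem sum_powerset_biUnion_prod {ι : Type*} [DecidableEq ι] {s : Finset ι} {S : ι → Finset α}
    (hS : (s : Set ι).PairwiseDisjoint S) (f : ι → Finset α → R) :
    ∑ F ∈ (s.biUnion S).powerset, ∏ i ∈ s, f i (F ∩ S i) =
      ∏ i ∈ s, ∑ A ∈ (S i).powerset, f i A := by
  induction s using Finset.induction_on with
  | empty => simp
  | insert a t ha ih =>
    have hdisj : Disjoint (S a) (t.biUnion S) := (disjoint_biUnion_right _ _ _).2 fun i hi =>
      hS (mem_insert_self a t) (mem_insert_of_mem hi) (fun h => ha (h ▸ hi))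
    have hrestrict : ∀ F, ∀ i ∈ t, F ∩ t.biUnion S ∩ S i = F ∩ S i := fun F i hi => by
      rw [inter_assoc, inter_eq_right.2 (subset_biUnion_of_mem S hi)]
    rw [biUnion_insert, prod_insert ha, ← ih (hS.subset (by simp)),
      ← sum_powerset_union_mul hdisj]
    refine sum_congr rfl fun F _ => ?_
    rw [prod_insert ha, prod_congr rfl fun i hi => by rw [← hrestrict F i hi]]

end PowersetSums

def weight (p : ℝ) (U F : Finset ℕ) : ℝ := ∏ x ∈ U, if x ∈ F then p else 1 - p

def muOn (p : ℝ) (U : Finset ℕ) (P : Finset ℕ → Prop) [DecidablePred P] : ℝ :=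
  ∑ F ∈ U.powerset with P F, weight p U F

theorem weight_eq_pow {p : ℝ} {U F : Finset ℕ} (hF : F ⊆ U) :
    weight p U F = p ^ #F * (1 - p) ^ (#U - #F) := by
  rw [weight, prod_ite, prod_const, prod_const, filter_mem_eq_inter, inter_eq_right.2 hF,
    filter_not, filter_mem_eq_inter, inter_eq_right.2 hF, card_sdiff_of_subset hF]

theorem mu_filter_eq_muOn {n : ℕ} {U : Finset ℕ} (hU : #U = n) (p : ℝ) (P : Finset ℕ → Prop)
    [DecidablePred P] : mu n p (U.powerset.filter P) = muOn p U P :=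
  sum_congr rfl fun _ hF => by rw [weight_eq_pow (mem_powerset.1 (mem_filter.1 hF).1), hU]

theorem sum_weight_powerset (p : ℝ) (U : Finset ℕ) : ∑ F ∈ U.powerset, weight p U F = 1 := by
  rw [sum_congr rfl fun F hF => weight_eq_pow (mem_powerset.1 hF), sum_pow_mul_eq_add_pow]
  simp

theorem muOn_congr {p : ℝ} {U : Finset ℕ} {P Q : Finset ℕ → Prop} [DecidablePred P]
    [DecidablePred Q] (h : ∀ F, P F ↔ Q F) : muOn p U P = muOn p U Q := by
  rw [muOn, muOn, filter_congr fun F _ => h F]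

theorem muOn_not (p : ℝ) (U : Finset ℕ) (P : Finset ℕ → Prop) [DecidablePred P] :
    muOn p U (fun F => ¬ P F) = 1 - muOn p U P := by
  rw [eq_sub_iff_add_eq, muOn, muOn, add_comm, sum_filter_add_sum_filter_not,
    sum_weight_powerset]

theorem weight_biUnion {ι : Type*} [DecidableEq ι] (p : ℝ) {s : Finset ι} {S : ι → Finset ℕ}
    (hS : (s : Set ι).PairwiseDisjoint S) (F : Finset ℕ) :
    weight p (s.biUnion S) F = ∏ i ∈ s, weight p (S i) (F ∩ S i) := by
  rw [weight, prod_biUnion hS]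
  refine prod_congr rfl fun i _ => prod_congr rfl fun x hx => ?_
  simp [hx]

theorem muOn_biUnion {ι : Type*} [DecidableEq ι] (p : ℝ) {s : Finset ι} {S : ι → Finset ℕ}
    (hS : (s : Set ι).PairwiseDisjoint S) (P : ι → Finset ℕ → Prop)
    [∀ i, DecidablePred (P i)] :
    muOn p (s.biUnion S) (fun F => ∀ i ∈ s, P i (F ∩ S i)) =
      ∏ i ∈ s, muOn p (S i) (P i) := by
  simp only [muOn, sum_filter]
  rw [← sum_powerset_biUnion_prod hS]
  refine sum_congr rfl fun F _ => ?_
  rw [prod_ite_zero, weight_biUnion p hS]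

theorem muOn_superset_self (p : ℝ) (B : Finset ℕ) : muOn p B (B ⊆ ·) = p ^ #B := by
  have : B.powerset.filter (B ⊆ ·) = {B} := by
    ext A
    simp only [mem_filter, mem_powerset, mem_singleton]
    exact ⟨fun h => h.1.antisymm h.2, fun h => h ▸ ⟨subset_rfl, subset_rfl⟩⟩
  rw [muOn, this, sum_singleton, weight_eq_pow subset_rfl, Nat.sub_self, pow_zero, mul_one]

theorem muOn_nonempty (p : ℝ) (B : Finset ℕ) :
    muOn p B (fun A => A.Nonempty) = 1 - (1 - p) ^ #B := by
  have : B.powerset.filter (fun A => ¬ A.Nonempty) = {∅} := by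
    ext A
    simp only [mem_filter, mem_powerset, not_nonempty_iff_eq_empty, mem_singleton]
    exact ⟨And.right, fun h => ⟨h ▸ empty_subset B, h⟩⟩
  rw [← sub_sub_cancel 1 (muOn p B _), ← muOn_not, muOn, this, sum_singleton,
    weight_eq_pow (empty_subset B)]
  simp

def block (k i : ℕ) : Finset ℕ := Ioc (i * k) (i * k + k)

theorem card_block (k i : ℕ) : #(block k i) = k := by
  simp [block]

theorem pairwiseDisjoint_block (k : ℕ) (s : Finset ℕ) :
    (s : Set ℕ).PairwiseDisjoint (block k) := by
  have key : ∀ i j, i < j → Disjoint (block k i) (block k j) := fun i j hij =>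
    Ioc_disjoint_Ioc_of_le (by nlinarith [Nat.mul_le_mul_right k (Nat.succ_le_of_lt hij)])
  intro i _ j _ hij
  rcases hij.lt_or_gt with h | h
  · exact key i j h
  · exact (key j i h).symm

theorem biUnion_block (k m : ℕ) : (range m).biUnion (block k) = Icc 1 (m * k) := by
  induction m with
  | zero => simp
  | succ m ih =>
    rw [range_add_one, biUnion_insert, ih, block]
    ext x
    simp only [mem_union, mem_Icc, mem_Ioc, add_one_mul]
    omega

theorem blockFamilies_mem_crossProdSet (p q : ℝ) (k m : ℕ) :
    (1 - (1 - p ^ k) ^ m) * (1 - (1 - q) ^ k) ^ m ∈ crossProdSet (m * k) p q := by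
  have hcard : #(Icc 1 (m * k)) = m * k := by simp
  refine ⟨(Icc 1 (m * k)).powerset.filter fun F => ∃ i ∈ range m, block k i ⊆ F,
    (Icc 1 (m * k)).powerset.filter fun F => ∀ i ∈ range m, (F ∩ block k i).Nonempty,
    filter_subset _ _, filter_subset _ _, ?_, ?_⟩
  · intro a ha b hb
    obtain ⟨i, hi, hblock⟩ := (mem_filter.1 ha).2
    obtain ⟨x, hx⟩ := (mem_filter.1 hb).2 i hi
    exact ⟨x, mem_inter.2 ⟨hblock (mem_inter.1 hx).2, (mem_inter.1 hx).1⟩⟩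
  · have hA : muOn p ((range m).biUnion (block k)) (fun F => ∃ i ∈ range m, block k i ⊆ F) =
        1 - muOn p ((range m).biUnion (block k))
          (fun F => ∀ i ∈ range m, ¬ block k i ⊆ F ∩ block k i) := by
      rw [← muOn_not]
      exact muOn_congr fun F => by simp [subset_inter_iff]
    rw [mu_filter_eq_muOn hcard, mu_filter_eq_muOn hcard, ← biUnion_block, hA,
      muOn_biUnion p (pairwiseDisjoint_block k _) (fun i A => ¬ block k i ⊆ A),
      muOn_biUnion q (pairwiseDisjoint_block k _) (fun _ A => A.Nonempty)]
    simp only [muOn_not, muOn_superset_self, muOn_nonempty, card_block, prod_const, card_range]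

section Asymptotics

open Filter Topology

variable {ι : Type*} {l : Filter ι} {c : ι → ℝ} {m : ι → ℕ}

theorem tendsto_one_sub_pow_zero (hc : ∀ i, c i ≤ 1)
    (h : Tendsto (fun i => m i * c i) l atTop) :
    Tendsto (fun i => (1 - c i) ^ m i) l (𝓝 0) := by
  refine squeeze_zero (fun i => pow_nonneg (sub_nonneg.2 (hc i)) _) (fun i => ?_)
    (Real.tendsto_exp_neg_atTop_nhds_zero.comp h)
  calc (1 - c i) ^ m i ≤ Real.exp (-c i) ^ m i :=
        pow_le_pow_left₀ (sub_nonneg.2 (hc i)) (Real.one_sub_le_exp_neg _) _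
    _ = Real.exp (-(m i * c i)) := by rw [← Real.exp_nat_mul, mul_neg]

theorem tendsto_one_sub_pow_one (hc0 : ∀ i, 0 ≤ c i) (hc1 : ∀ i, c i ≤ 1)
    (h : Tendsto (fun i => m i * c i) l (𝓝 0)) :
    Tendsto (fun i => (1 - c i) ^ m i) l (𝓝 1) := by
  have hlower : Tendsto (fun i => 1 - m i * c i) l (𝓝 1) := by
    simpa using tendsto_const_nhds.sub h
  refine tendsto_of_tendsto_of_tendsto_of_le_of_le hlower tendsto_const_nhds (fun i => ?_)
    (fun i => pow_le_one₀ (sub_nonneg.2 (hc1 i)) (sub_le_self _ (hc0 i)))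
  simpa [sub_eq_add_neg] using one_add_mul_le_pow (a := -c i) (by linarith [hc1 i]) (m i)

theorem tendsto_blockProduct {a b : ℝ} (ha : 0 < a) (ha1 : a ≤ 1) (hb : 0 ≤ b) (hba : b < a) :
    Tendsto (fun k : ℕ => (1 - (1 - a ^ k) ^ ⌈k / a ^ k⌉₊) * (1 - b ^ k) ^ ⌈k / a ^ k⌉₊)
      atTop (𝓝 1) := by
  set m : ℕ → ℕ := fun k => ⌈k / a ^ k⌉₊
  have hcover : Tendsto (fun k => m k * a ^ k) atTop atTop := by
    refine tendsto_atTop_mono (fun k => ?_) tendsto_natCast_atTop_atTop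
    exact (div_le_iff₀ (pow_pos ha k)).1 (Nat.le_ceil _)
  have hmiss : Tendsto (fun k => m k * b ^ k) atTop (𝓝 0) := by
    have hbound : ∀ k : ℕ, m k * b ^ k ≤ k * (b / a) ^ k + b ^ k := fun k => by
      calc m k * b ^ k ≤ (k / a ^ k + 1) * b ^ k :=
            mul_le_mul_of_nonneg_right (Nat.ceil_lt_add_one (by positivity)).le (by positivity)
        _ = k * (b / a) ^ k + b ^ k := by rw [div_pow]; field_simp
    have hlim : Tendsto (fun k : ℕ => k * (b / a) ^ k + b ^ k) atTop (𝓝 0) := by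
      simpa using (tendsto_self_mul_const_pow_of_lt_one (div_nonneg hb ha.le)
        ((div_lt_one ha).2 hba)).add
        (tendsto_pow_atTop_nhds_zero_of_lt_one hb (hba.trans_le ha1))
    exact squeeze_zero (fun k => by positivity) hbound hlim
  simpa using (tendsto_const_nhds.sub (tendsto_one_sub_pow_zero
    (fun k => pow_le_one₀ ha.le ha1) hcover)).mul
    (tendsto_one_sub_pow_one (fun k => pow_nonneg hb k)
      (fun k => pow_le_one₀ hb (hba.trans_le ha1).le) hmiss)

end Asymptotics

theorem mu_nonneg (n : ℕ) {p : ℝ} (hp0 : 0 ≤ p) (hp1 : p ≤ 1) (A : Finset (Finset ℕ)) :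
    0 ≤ mu n p A :=
  sum_nonneg fun _ _ => mul_nonneg (pow_nonneg hp0 _) (pow_nonneg (sub_nonneg.2 hp1) _)

theorem mu_le_one {n : ℕ} {p : ℝ} (hp0 : 0 ≤ p) (hp1 : p ≤ 1) {A : Finset (Finset ℕ)}
    (hA : A ⊆ (Icc 1 n).powerset) : mu n p A ≤ 1 := by
  calc mu n p A ≤ mu n p (Icc 1 n).powerset :=
        sum_le_sum_of_subset_of_nonneg hA fun _ _ _ =>
          mul_nonneg (pow_nonneg hp0 _) (pow_nonneg (sub_nonneg.2 hp1) _)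
    _ = 1 := by
      simpa [mu] using sum_pow_mul_eq_add_pow p (1 - p) (Icc 1 n)

theorem le_one_of_mem_crossProdSet {n : ℕ} {p q x : ℝ} (hp0 : 0 ≤ p) (hp1 : p ≤ 1) (hq0 : 0 ≤ q)
    (hq1 : q ≤ 1) (hx : x ∈ crossProdSet n p q) : x ≤ 1 := by
  obtain ⟨A, B, hA, hB, -, rfl⟩ := hx
  exact mul_le_one₀ (mu_le_one hp0 hp1 hA) (mu_nonneg n hq0 hq1 B) (mu_le_one hq0 hq1 hB)

theorem exists_mem_crossProdSet_gt {α β : ℝ} (hα0 : 0 < α) (hα1 : α < 1) (hβ1 : β < 1)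
    (hab : 1 < α + β) {ε : ℝ} (hε : 0 < ε) :
    ∃ n : ℕ, ∃ x ∈ crossProdSet (n + 1) α β, 1 - ε < x := by
  have hlim := tendsto_blockProduct hα0 hα1.le (sub_nonneg.2 hβ1.le) (by linarith)
  obtain ⟨k, hk, hk1⟩ := ((hlim.eventually (lt_mem_nhds (sub_lt_self 1 hε))).and
    (Filter.eventually_ge_atTop 1)).exists
  obtain ⟨n, hn⟩ : ∃ n, ⌈k / α ^ k⌉₊ * k = n + 1 :=
    Nat.exists_eq_add_one_of_ne_zero (mul_ne_zero (by positivity) (by positivity))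
  refine ⟨n, _, hn ▸ blockFamilies_mem_crossProdSet α β k _, ?_⟩
  simpa using hk

theorem stmt_10 (α β : ℝ)
    (hα : α ∈ Set.Ioo (0:ℝ) 1) (hβ : β ∈ Set.Ioo (0:ℝ) 1) (hab : 1 < α + β) :
    (⨆ n : ℕ, sSup (crossProdSet (n+1) α β)) = 1 ∧
      ∀ ε : ℝ, 0 < ε → ∃ (n : ℕ) (A B : Finset (Finset ℕ)),
        A ⊆ (Finset.Icc 1 n).powerset ∧ B ⊆ (Finset.Icc 1 n).powerset ∧
        (∀ a ∈ A, ∀ b ∈ B, (a ∩ b).Nonempty) ∧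
        1 - ε < mu n α A * mu n β B := by
  obtain ⟨hα0, hα1⟩ := hα
  obtain ⟨hβ0, hβ1⟩ := hβ
  have hmem : ∀ n, ∀ x ∈ crossProdSet n α β, x ≤ 1 := fun _ _ =>
    le_one_of_mem_crossProdSet hα0.le hα1.le hβ0.le hβ1.le
  have hle : ∀ n, sSup (crossProdSet n α β) ≤ 1 := fun n => Real.sSup_le (hmem n) zero_le_one
  have happrox := fun ε (hε : 0 < ε) => exists_mem_crossProdSet_gt hα0 hα1 hβ1 hab hε
  refine ⟨le_antisymm (ciSup_le fun n => hle _) (le_of_forall_pos_lt_add fun ε hε => ?_),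
    fun ε hε => ?_⟩
  · obtain ⟨n, x, hx, hlt⟩ := happrox ε hε
    calc 1 < x + ε := by linarith
      _ ≤ sSup (crossProdSet (n + 1) α β) + ε := by gcongr; exact le_csSup ⟨1, hmem _⟩ hx
      _ ≤ _ := by gcongr; exact le_ciSup ⟨1, Set.forall_mem_range.2 fun m => hle (m + 1)⟩ n
  · obtain ⟨n, _, ⟨A, B, hA, hB, hAB, rfl⟩, hlt⟩ := happrox ε hε
    exact ⟨n + 1, A, B, hA, hB, hAB, hlt⟩
end

section
/- Let n, k, l be positive integers with k + l < n and l > n/2, and suppose (1 + (n-k)/(n-1))·(l-1)/(n-1) < 1. Then |𝒜₀^{(k)}|·|ℬ₀^{(l)}| < C(n-1,k-1)·C(n-1,l-1), where |𝒜₀^{(k)}| = C(n-1,k-1) + C(n-2,k-1) and |ℬ₀^{(l)}| = C(n-1,l-1) − C(n-2,l-1). -/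
theorem stmt_11 (n k l : ℕ) (hk : 0 < k) (hl : 0 < l) (hkl : k + l < n)
    (hl2 : n < 2 * l)
    (hC1 : (1 + ((n:ℝ) - k) / ((n:ℝ) - 1)) * (((l:ℝ) - 1) / ((n:ℝ) - 1)) < 1) :
    (Nat.choose (n-1) (k-1) + Nat.choose (n-2) (k-1)) *
      (Nat.choose (n-1) (l-1) - Nat.choose (n-2) (l-1)) <
        Nat.choose (n-1) (k-1) * Nat.choose (n-1) (l-1) := by
  have hn3 : 3 ≤ n := by omega
  set A := Nat.choose (n-1) (k-1) with hA
  set a := Nat.choose (n-2) (k-1) with ha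
  set B := Nat.choose (n-1) (l-1) with hB
  set b := Nat.choose (n-2) (l-1) with hb
  have h1 : a * (n - 1) = A * (n - k) := by
    have := Nat.choose_mul_succ_eq (n-2) (k-1)
    have e1 : n - 2 + 1 = n - 1 := by omega
    rw [e1] at this
    have e2 : n - 1 - (k - 1) = n - k := by omega
    rw [e2] at this
    simpa [hA, ha] using this
  have h2 : b * (n - 1) = B * (n - l) := by
    have := Nat.choose_mul_succ_eq (n-2) (l-1)
    have e1 : n - 2 + 1 = n - 1 := by omega
    rw [e1] at this
    have e2 : n - 1 - (l - 1) = n - l := by omega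
    rw [e2] at this
    simpa [hB, hb] using this
  have hba : b ≤ B := Nat.choose_le_choose (l-1) (by omega : n - 2 ≤ n - 1)
  have hApos : 0 < A := Nat.choose_pos (by omega)
  have hBpos : 0 < B := Nat.choose_pos (by omega)
  -- move to reals
  have hd : (0:ℝ) < (n:ℝ) - 1 := by
    have : (3:ℝ) ≤ (n:ℝ) := by exact_mod_cast hn3
    linarith
  have key : (2*(n:ℝ) - k - 1) * ((l:ℝ) - 1) < ((n:ℝ) - 1)^2 := by
    have hne : ((n:ℝ) - 1) ≠ 0 := ne_of_gt hd
    rw [one_add_div hne, div_mul_div_comm, div_lt_one (by positivity)] at hC1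
    nlinarith [hC1]
  have ha' : (a:ℝ) * ((n:ℝ) - 1) = (A:ℝ) * ((n:ℝ) - (k:ℝ)) := by
    have := congrArg (Nat.cast (R := ℝ)) h1
    push_cast [Nat.cast_sub (by omega : 1 ≤ n), Nat.cast_sub (by omega : k ≤ n)] at this
    linarith [this]
  have hb' : (b:ℝ) * ((n:ℝ) - 1) = (B:ℝ) * ((n:ℝ) - (l:ℝ)) := by
    have := congrArg (Nat.cast (R := ℝ)) h2
    push_cast [Nat.cast_sub (by omega : 1 ≤ n), Nat.cast_sub (by omega : l ≤ n)] at this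
    linarith [this]
  have e1 : ((A:ℝ) + a) * ((n:ℝ) - 1) = (A:ℝ) * (2*(n:ℝ) - k - 1) := by
    have : ((A:ℝ) + a) * ((n:ℝ) - 1) = (A:ℝ) * ((n:ℝ)-1) + (a:ℝ) * ((n:ℝ)-1) := by ring
    rw [this, ha']; ring
  have e2 : ((B:ℝ) - b) * ((n:ℝ) - 1) = (B:ℝ) * ((l:ℝ) - 1) := by
    have : ((B:ℝ) - b) * ((n:ℝ) - 1) = (B:ℝ) * ((n:ℝ)-1) - (b:ℝ) * ((n:ℝ)-1) := by ring
    rw [this, hb']; ring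
  have e3 : ((A:ℝ) + a) * ((B:ℝ) - b) * ((n:ℝ) - 1)^2
      = (A:ℝ) * (B:ℝ) * ((2*(n:ℝ) - k - 1) * ((l:ℝ) - 1)) := by
    calc ((A:ℝ) + a) * ((B:ℝ) - b) * ((n:ℝ) - 1)^2
        = (((A:ℝ) + a) * ((n:ℝ) - 1)) * (((B:ℝ) - b) * ((n:ℝ) - 1)) := by ring
      _ = ((A:ℝ) * (2*(n:ℝ) - k - 1)) * ((B:ℝ) * ((l:ℝ) - 1)) := by rw [e1, e2]
      _ = (A:ℝ) * (B:ℝ) * ((2*(n:ℝ) - k - 1) * ((l:ℝ) - 1)) := by ring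
  have hABpos : (0:ℝ) < (A:ℝ) * (B:ℝ) := by
    have : (0:ℝ) < (A:ℝ) := by exact_mod_cast hApos
    have h' : (0:ℝ) < (B:ℝ) := by exact_mod_cast hBpos
    positivity
  have hr : ((A:ℝ) + a) * ((B:ℝ) - b) < (A:ℝ) * (B:ℝ) := by
    have h4 : ((A:ℝ) + a) * ((B:ℝ) - b) * ((n:ℝ) - 1)^2 < (A:ℝ) * (B:ℝ) * ((n:ℝ) - 1)^2 := by
      rw [e3]
      exact mul_lt_mul_of_pos_left key hABpos
    exact lt_of_mul_lt_mul_right h4 (by positivity)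
  have : ((A + a : ℕ):ℝ) * ((B - b : ℕ):ℝ) < ((A:ℕ):ℝ) * ((B:ℕ):ℝ) := by
    push_cast [Nat.cast_sub hba]
    exact hr
  exact_mod_cast this
end

section
/- For every j ≥ 0 and n ≥ j+2, the families 𝒜_j^{(k)} = {A ∈ C([n],k) : 1 ∈ A} ∪ {A ∈ C([n],k) : A ∩ [j+2] = [j+2]\{1}} and ℬ_j^{(l)} = {B ∈ C([n],l) : 1 ∈ B} \ {B ∈ C([n],l) : B ∩ [j+2] = {1}} are cross-intersecting, i.e., A ∩ B ≠ ∅ for all A ∈ 𝒜_j^{(k)} and B ∈ ℬ_j^{(l)}. -/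
open Finset

theorem stmt_13 (n j k l : ℕ) (hn : j + 2 ≤ n)
    (A B : Finset ℕ)
    (hA : A ∈ (Finset.powersetCard k (Finset.Icc 1 n)).filter
        (fun A => 1 ∈ A ∨ A ∩ Finset.Icc 1 (j+2) = Finset.Icc 2 (j+2)))
    (hB : B ∈ (Finset.powersetCard l (Finset.Icc 1 n)).filter
        (fun B => 1 ∈ B ∧ ¬ (B ∩ Finset.Icc 1 (j+2) = {1}))) :
    (A ∩ B).Nonempty := by
  simp only [mem_filter, mem_powersetCard] at hA hB
  obtain ⟨-, hA2⟩ := hA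
  obtain ⟨⟨hBsub, -⟩, h1B, hBne⟩ := hB
  rcases hA2 with h1A | hAeq
  · exact ⟨1, mem_inter.2 ⟨h1A, h1B⟩⟩
  -- B ∩ Icc 1 (j+2) contains some element ≠ 1
  have h1n : 1 ≤ n := le_trans (by omega) hn
  have h1mem : 1 ∈ B ∩ Finset.Icc 1 (j+2) :=
    mem_inter.2 ⟨h1B, by simp⟩
  have : ¬ B ∩ Finset.Icc 1 (j+2) ⊆ {1} := by
    intro hsub
    exact hBne (Finset.Subset.antisymm hsub (by simpa using h1mem))
  obtain ⟨b, hb, hb1⟩ := not_subset.1 this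
  simp only [mem_singleton] at hb1
  obtain ⟨hbB, hbI⟩ := mem_inter.1 hb
  simp only [Finset.mem_Icc] at hbI
  have hbA : b ∈ A := by
    have : b ∈ A ∩ Finset.Icc 1 (j+2) := by
      rw [hAeq]; simp [Finset.mem_Icc]; omega
    exact (mem_inter.1 this).1
  exact ⟨b, mem_inter.2 ⟨hbA, hbB⟩⟩
end

section
/- Fix reals β ∈ (0,1) and 0 < t ≤ s with t a positive integer. With l = ⌊βn⌋, the ratio C(n-s, l-t)/C(n,l) tends to β^t(1-β)^{s-t} as n → ∞, where C(x, m) = Γ(x+1)/(Γ(m+1)Γ(x-m+1)) for real x ≥ m. -/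
noncomputable def Cg (x m : ℝ) : ℝ :=
  Real.Gamma (x + 1) / (Real.Gamma (m + 1) * Real.Gamma (x - m + 1))

/-!
Log-convexity of `Γ`, applied at the points `x, x + 1` and `x + r, x + r + 1`, gives Wendel's
inequalities `(x / (x + r)) ^ (1 - r) ≤ Γ (x + r) / (Γ x * x ^ r) ≤ 1` for `0 ≤ r ≤ 1`, so
`Γ (x + a) ~ Γ x * x ^ a` as `x → ∞`, first for `a ∈ [0, 1]` and then for every `a ≥ 0` by
`Γ (y + 1) = y * Γ y`. The ratio of generalized binomial coefficients is a product of three ratios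
`Γ (y + 1) / Γ (y + 1 - c)` with `y ∈ {l, n - l, n}`, all tending to infinity, hence it is
asymptotic to `l ^ t * (n - l) ^ (s - t) / n ^ s = (l / n) ^ t * (1 - l / n) ^ (s - t)`,
and `l / n → β`.
-/

open Real Filter Asymptotics Topology Set

theorem isEquivalent_add_const_self (c : ℝ) : (fun x : ℝ => x + c) ~[atTop] fun x => x :=
  IsEquivalent.refl.add_const_of_norm_tendsto_atTop tendsto_norm_atTop_atTop

theorem isEquivalent_add_const_rpow (c a : ℝ) :
    (fun x : ℝ => (x + c) ^ a) ~[atTop] fun x => x ^ a := by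
  have hmax : (fun x : ℝ => x) =ᶠ[atTop] fun x => max x 0 := by
    filter_upwards [eventually_ge_atTop 0] with x hx
    rw [max_eq_left hx]
  refine (((isEquivalent_add_const_self c).congr_right hmax).rpow
    (fun x => le_max_right x 0)).congr_right ?_
  filter_upwards [eventually_ge_atTop 0] with x hx
  rw [Pi.pow_apply, max_eq_left hx]

section Wendel

variable {r x : ℝ}

theorem Gamma_add_le_Gamma_mul_rpow (hr0 : 0 ≤ r) (hr1 : r ≤ 1) (hx : 0 < x) :
    Gamma (x + r) ≤ Gamma x * x ^ r := by
  have hconv := convexOn_log_Gamma.2 (mem_Ioi.mpr hx) (mem_Ioi.mpr (by linarith : 0 < x + 1))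
    (sub_nonneg.2 hr1) hr0 (sub_add_cancel 1 r)
  simp only [smul_eq_mul, Function.comp_apply] at hconv
  rw [show (1 - r) * x + r * (x + 1) = x + r by ring, Gamma_add_one hx.ne',
    log_mul hx.ne' (Gamma_pos_of_pos hx).ne'] at hconv
  rw [← log_le_log_iff (Gamma_pos_of_pos (by linarith)) (by positivity),
    log_mul (Gamma_pos_of_pos hx).ne' (by positivity), log_rpow hx]
  linarith

theorem mul_Gamma_le_Gamma_add_mul_rpow (hr0 : 0 ≤ r) (hr1 : r ≤ 1) (hx : 0 < x) :
    x * Gamma x ≤ Gamma (x + r) * (x + r) ^ (1 - r) := by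
  have hxr : 0 < x + r := by linarith
  have hconv := convexOn_log_Gamma.2 (mem_Ioi.mpr hxr) (mem_Ioi.mpr (by linarith : 0 < x + r + 1))
    hr0 (sub_nonneg.2 hr1) (add_sub_cancel r 1)
  simp only [smul_eq_mul, Function.comp_apply] at hconv
  rw [show r * (x + r) + (1 - r) * (x + r + 1) = x + 1 by ring, Gamma_add_one hx.ne',
    Gamma_add_one hxr.ne', log_mul hxr.ne' (Gamma_pos_of_pos hxr).ne'] at hconv
  rw [← Gamma_add_one hx.ne', ← log_le_log_iff (Gamma_pos_of_pos (by linarith)) (by positivity),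
    log_mul (Gamma_pos_of_pos hxr).ne' (by positivity), log_rpow hxr, Gamma_add_one hx.ne']
  nlinarith

end Wendel

theorem isEquivalent_Gamma_add_of_le_one {r : ℝ} (hr0 : 0 ≤ r) (hr1 : r ≤ 1) :
    (fun x => Gamma (x + r)) ~[atTop] fun x => Gamma x * x ^ r := by
  refine isEquivalent_of_tendsto_one ?_
  have hlower : Tendsto (fun x : ℝ => (x / (x + r)) ^ (1 - r)) atTop (𝓝 1) := by
    have hratio := (isEquivalent_iff_tendsto_one <| (eventually_gt_atTop (-r)).mono fun x hx => by
      linarith).mp (isEquivalent_add_const_self r).symm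
    simpa using hratio.rpow_const (p := 1 - r) (Or.inl one_ne_zero)
  refine tendsto_of_tendsto_of_tendsto_of_le_of_le' hlower tendsto_const_nhds ?_ ?_
  all_goals filter_upwards [eventually_gt_atTop 0] with x hx
  all_goals have hGx := Gamma_pos_of_pos hx
  · have hxr : 0 < x + r := by linarith
    rw [Pi.div_apply, div_rpow hx.le hxr.le, div_le_div_iff₀ (by positivity) (by positivity),
      show x ^ (1 - r) * (Gamma x * x ^ r) = x ^ (1 - r + r) * Gamma x by rw [rpow_add hx]; ring,
      sub_add_cancel, rpow_one]
    exact mul_Gamma_le_Gamma_add_mul_rpow hr0 hr1 hx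
  · rw [Pi.div_apply, div_le_one (by positivity)]
    exact Gamma_add_le_Gamma_mul_rpow hr0 hr1 hx

theorem isEquivalent_Gamma_add_add_one {a : ℝ}
    (h : (fun x => Gamma (x + a)) ~[atTop] fun x => Gamma x * x ^ a) :
    (fun x => Gamma (x + (a + 1))) ~[atTop] fun x => Gamma x * x ^ (a + 1) := by
  refine (((isEquivalent_add_const_self a).mul h).congr_left ?_).congr_right ?_
  · filter_upwards [eventually_gt_atTop (-a)] with x hx
    rw [Pi.mul_apply, ← add_assoc, Gamma_add_one (by linarith)]
  · filter_upwards [eventually_gt_atTop 0] with x hx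
    rw [Pi.mul_apply, rpow_add_one hx.ne']
    ring

theorem isEquivalent_Gamma_add {a : ℝ} (ha : 0 ≤ a) :
    (fun x => Gamma (x + a)) ~[atTop] fun x => Gamma x * x ^ a := by
  have hind : ∀ k : ℕ, ∀ r ∈ Icc (0 : ℝ) 1,
      (fun x => Gamma (x + (r + k))) ~[atTop] fun x => Gamma x * x ^ (r + k) := by
    intro k r hr
    induction k with
    | zero => simpa using isEquivalent_Gamma_add_of_le_one hr.1 hr.2
    | succ k ih =>
      push_cast
      simpa only [add_assoc] using isEquivalent_Gamma_add_add_one ih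
  simpa using hind ⌊a⌋₊ (a - ⌊a⌋₊)
    ⟨sub_nonneg.2 (Nat.floor_le ha), by linarith [Nat.lt_floor_add_one a]⟩

theorem isEquivalent_Gamma_add_div_Gamma_add {b c : ℝ} (hcb : c ≤ b) :
    (fun x => Gamma (x + b) / Gamma (x + c)) ~[atTop] fun x => x ^ (b - c) := by
  have hshift := (isEquivalent_Gamma_add (sub_nonneg.2 hcb)).comp_tendsto
    (tendsto_atTop_add_const_right atTop c tendsto_id)
  refine (((hshift.div (IsEquivalent.refl (u := fun x => Gamma (x + c)))).congr_left ?_).congr_right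
    ?_).trans (isEquivalent_add_const_rpow c (b - c))
  · filter_upwards with x
    simp
  · filter_upwards [eventually_gt_atTop (-c)] with x hx
    have := (Gamma_pos_of_pos (by linarith : 0 < x + c)).ne'
    simp only [Pi.div_apply, Function.comp_apply, id]
    field_simp

theorem Cg_sub_div_Cg (x m a b : ℝ) :
    Cg (x - a) (m - b) / Cg x m =
      Gamma (m + 1) / Gamma (m + (1 - b)) * (Gamma (x - m + 1) / Gamma (x - m + (1 - (a - b)))) /
        (Gamma (x + 1) / Gamma (x + (1 - a))) := by
  rw [Cg, Cg, show x - a + 1 = x + (1 - a) by ring, show m - b + 1 = m + (1 - b) by ring,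
    show x - a - (m - b) + 1 = x - m + (1 - (a - b)) by ring]
  simp only [div_eq_mul_inv, mul_inv, inv_inv]
  ring

theorem isEquivalent_Cg_sub_div_Cg {ι : Type*} {F : Filter ι} {x m : ι → ℝ} {a b : ℝ}
    (hb : 0 ≤ b) (hba : b ≤ a) (hm : Tendsto m F atTop)
    (hxm : Tendsto (fun i => x i - m i) F atTop) :
    (fun i => Cg (x i - a) (m i - b) / Cg (x i) (m i)) ~[F]
      fun i => m i ^ b * (x i - m i) ^ (a - b) / x i ^ a := by
  have hx : Tendsto x F atTop := by simpa using hm.atTop_add_atTop hxm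
  have hequiv :=
    (((isEquivalent_Gamma_add_div_Gamma_add (by linarith : 1 - b ≤ 1)).comp_tendsto hm).mul
      ((isEquivalent_Gamma_add_div_Gamma_add (by linarith : 1 - (a - b) ≤ 1)).comp_tendsto hxm)).div
      ((isEquivalent_Gamma_add_div_Gamma_add (by linarith : 1 - a ≤ 1)).comp_tendsto hx)
  simp only [sub_sub_cancel] at hequiv
  exact hequiv.congr_left (Eventually.of_forall fun i => (Cg_sub_div_Cg (x i) (m i) a b).symm)

theorem rpow_mul_sub_rpow_div_rpow_add {u x : ℝ} (a b : ℝ) (hu : 0 ≤ u) (hux : u ≤ x)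
    (hx : 0 < x) : u ^ a * (x - u) ^ b / x ^ (a + b) = (u / x) ^ a * (1 - u / x) ^ b := by
  rw [one_sub_div hx.ne', div_rpow hu hx.le, div_rpow (sub_nonneg.2 hux) hx.le, rpow_add hx]
  ring

theorem tendsto_sub_natFloor_mul_atTop {β : ℝ} (hβ0 : 0 ≤ β) (hβ1 : β < 1) :
    Tendsto (fun n : ℕ => (n : ℝ) - ⌊β * n⌋₊) atTop atTop := by
  refine tendsto_atTop_mono (fun n => ?_)
    (tendsto_natCast_atTop_atTop.const_mul_atTop (sub_pos.2 hβ1))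
  linarith [Nat.floor_le (by positivity : 0 ≤ β * n)]

theorem stmt_15_general (β : ℝ) (hβ : β ∈ Set.Ioo (0:ℝ) 1)
    (t : ℕ) (s : ℝ) (hts : (t:ℝ) ≤ s) :
    Filter.Tendsto
      (fun n : ℕ =>
        Cg ((n:ℝ) - s) ((Nat.floor (β * n) : ℝ) - t) /
          Cg (n:ℝ) ((Nat.floor (β * n) : ℝ)))
      Filter.atTop (nhds (β ^ t * (1 - β) ^ (s - (t:ℝ)))) := by
  obtain ⟨hβ0, hβ1⟩ := hβ
  have hl : Tendsto (fun n : ℕ => (⌊β * n⌋₊ : ℝ)) atTop atTop := tendsto_natCast_atTop_atTop.comp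
    (tendsto_nat_floor_atTop.comp (tendsto_natCast_atTop_atTop.const_mul_atTop hβ0))
  refine ((isEquivalent_Cg_sub_div_Cg t.cast_nonneg hts hl
    (tendsto_sub_natFloor_mul_atTop hβ0.le hβ1)).symm.tendsto_nhds ?_)
  have hl_div : Tendsto (fun n : ℕ => (⌊β * n⌋₊ : ℝ) / n) atTop (𝓝 β) :=
    (tendsto_nat_floor_mul_div_atTop hβ0.le).comp tendsto_natCast_atTop_atTop
  have hlim := (hl_div.rpow_const (p := t) (Or.inl hβ0.ne')).mul
    ((tendsto_const_nhds (x := (1 : ℝ))).sub hl_div |>.rpow_const (Or.inr (sub_nonneg.2 hts)))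
  rw [rpow_natCast] at hlim
  refine hlim.congr' ?_
  filter_upwards [eventually_gt_atTop 0] with n hn
  have hl_le : (⌊β * n⌋₊ : ℝ) ≤ n :=
    (Nat.floor_le (by positivity)).trans (mul_le_of_le_one_left n.cast_nonneg hβ1.le)
  have hsplit := rpow_mul_sub_rpow_div_rpow_add (t : ℝ) (s - t) (Nat.cast_nonneg _) hl_le
    (Nat.cast_pos.2 hn)
  rw [add_sub_cancel] at hsplit
  exact hsplit.symm

theorem stmt_15 (β : ℝ) (hβ : β ∈ Set.Ioo (0:ℝ) 1)
    (t : ℕ) (ht : 0 < t) (s : ℝ) (hts : (t:ℝ) ≤ s) :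
    Filter.Tendsto
      (fun n : ℕ =>
        Cg ((n:ℝ) - s) ((Nat.floor (β * n) : ℝ) - t) /
          Cg (n:ℝ) ((Nat.floor (β * n) : ℝ)))
      Filter.atTop (nhds (β ^ t * (1 - β) ^ (s - (t:ℝ)))) :=
  stmt_15_general β hβ t s hts
end

section
/- Let α ∈ (0, 1/2) be fixed. There exists i₀ such that for all integers i ≥ i₀, (1 + α^{i-2}(1-α))·log(1/(1 − e_{i-2}(α))) < log(1/α), where e_j(α) := 1 − ((α^j − α^{j+1})/(1 + α^j − α^{j+1}))^{1/(j+1)}. -/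
/-!
With `x = α ^ j * (1 - α)` one has `1 - ej α j = (x / (1 + x)) ^ (1 / (j + 1))`, so `j + 1` times the
gap `log (1 / α) - (1 + x) * log (1 / (1 - ej α j))` equals
`log (1 / α) - j * x * log (1 / α) + (1 + x) * (log (1 - α) - log (1 + x))`: the terms of order `j`
cancel. As `x → 0` and `j * x → 0`, this tends to `log ((1 - α) / α)`, which is positive because
`α < 1 / 2`.
-/

noncomputable def ej (α : ℝ) (j : ℕ) : ℝ :=
  1 - ((α ^ j - α ^ (j+1)) / (1 + α ^ j - α ^ (j+1))) ^ ((1:ℝ) / (j+1))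

open Filter Topology Real

lemma one_sub_ej (α : ℝ) (j : ℕ) :
    1 - ej α j = (α ^ j * (1 - α) / (1 + α ^ j * (1 - α))) ^ ((1 : ℝ) / (j + 1)) := by
  rw [ej, sub_sub_cancel]
  ring_nf

lemma log_one_div_one_sub_ej {α : ℝ} (hα0 : 0 < α) (hα1 : α < 1) (j : ℕ) :
    log (1 / (1 - ej α j)) =
      (log (1 + α ^ j * (1 - α)) - j * log α - log (1 - α)) / (j + 1) := by
  have hx : 0 < α ^ j * (1 - α) := mul_pos (pow_pos hα0 j) (by linarith)
  rw [one_sub_ej, one_div, log_inv, log_rpow (by positivity), log_div hx.ne' (by positivity),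
    log_mul (pow_pos hα0 j).ne' (by linarith), log_pow]
  ring

lemma succ_mul_log_sub_eq {α : ℝ} (hα0 : 0 < α) (hα1 : α < 1) (j : ℕ) :
    ((j : ℝ) + 1) * (log (1 / α) - (1 + α ^ j * (1 - α)) * log (1 / (1 - ej α j))) =
      log (1 / α) - j * log (1 / α) * (α ^ j * (1 - α)) +
        (1 + α ^ j * (1 - α)) * (log (1 - α) - log (1 + α ^ j * (1 - α))) := by
  rw [log_one_div_one_sub_ej hα0 hα1, one_div, log_inv]
  field_simp
  ring

lemma tendsto_succ_mul_log_sub {α : ℝ} (hα0 : 0 < α) (hα1 : α < 1) :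
    Tendsto (fun j : ℕ => ((j : ℝ) + 1) *
        (log (1 / α) - (1 + α ^ j * (1 - α)) * log (1 / (1 - ej α j))))
      atTop (𝓝 (log (1 / α) + log (1 - α))) := by
  simp only [succ_mul_log_sub_eq hα0 hα1]
  have hx : Tendsto (fun j : ℕ => α ^ j * (1 - α)) atTop (𝓝 0) := by
    simpa using (tendsto_pow_atTop_nhds_zero_of_lt_one hα0.le hα1).mul_const (1 - α)
  have hjx : Tendsto (fun j : ℕ => j * log (1 / α) * (α ^ j * (1 - α))) atTop (𝓝 0) := by
    simpa [mul_comm, mul_left_comm, mul_assoc] using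
      (tendsto_self_mul_const_pow_of_lt_one hα0.le hα1).mul_const (log (1 / α) * (1 - α))
  have h1x : Tendsto (fun j : ℕ => 1 + α ^ j * (1 - α)) atTop (𝓝 1) := by
    simpa using hx.const_add 1
  have hlog : Tendsto (fun j : ℕ => log (1 + α ^ j * (1 - α))) atTop (𝓝 0) := by
    simpa [Function.comp_def] using (continuousAt_log one_ne_zero).tendsto.comp h1x
  simpa using (hjx.const_sub (log (1 / α))).add (h1x.mul (hlog.const_sub (log (1 - α))))

lemma eventually_mul_log_lt {α : ℝ} (hα0 : 0 < α) (hα2 : α < 1 / 2) :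
    ∀ᶠ j : ℕ in atTop,
      (1 + α ^ j * (1 - α)) * log (1 / (1 - ej α j)) < log (1 / α) := by
  have hlim : 0 < log (1 / α) + log (1 - α) := by
    rw [one_div, log_inv]
    linarith [log_lt_log hα0 (by linarith : α < 1 - α)]
  filter_upwards [(tendsto_succ_mul_log_sub hα0 (by linarith)).eventually_const_lt hlim]
    with j hj
  exact sub_pos.mp (pos_of_mul_pos_right hj (by positivity))

theorem stmt_17 (α : ℝ) (hα : α ∈ Set.Ioo (0:ℝ) (1/2)) :
    ∃ i₀ : ℕ, ∀ i : ℕ, i₀ ≤ i →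
      (1 + α ^ (i-2) * (1 - α)) * Real.log (1 / (1 - ej α (i-2))) <
        Real.log (1 / α) := by
  obtain ⟨N, hN⟩ := eventually_atTop.mp (eventually_mul_log_lt hα.1 hα.2)
  exact ⟨N + 2, fun i hi => hN (i - 2) (by omega)⟩
end
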